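/- arXiv:2409.19316 — 2 statements merged into one kernel-verified Lean document; each statement's English description precedes it below -/
import Mathlib

section
/- For a multiuser downlink with channel vectors h₁,…,h_K ∈ ℂ^{MN}, beamformers w₁,…,w_K ∈ ℂ^{MN} with Σ_k ‖w_k‖₂² ≤ P, and SINR γ_k = |h_kᴴw_k|²/(Σ_{j≠k}|h_kᴴw_j|² + σ²), it holds that min_k γ_k ≤ (P/σ²)·(Σ_{k=1}^K 1/‖h_k‖₂²)^{-1}. -/
open Finset Complex

/-!
Dropping the interference only increases each SINR, and Cauchy–Schwarz then gives
`γ_k ≤ ‖h_k‖² ‖w_k‖² / σ²`. So if every `γ_k` is at least `m > 0`, user `k` needs power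
`‖w_k‖² ≥ m σ² / ‖h_k‖²`; summing over `k` against the budget `P` bounds `m`.
-/

theorem norm_sum_conj_mul_sq_le {𝕜 ι : Type*} [RCLike 𝕜] [Fintype ι] (x y : ι → 𝕜) :
    ‖∑ i, starRingEnd 𝕜 (x i) * y i‖ ^ 2 ≤ (∑ i, ‖x i‖ ^ 2) * ∑ i, ‖y i‖ ^ 2 := by
  have hinner :
      ∑ i, starRingEnd 𝕜 (x i) * y i = inner 𝕜 (WithLp.toLp 2 x) (WithLp.toLp 2 y) := by
    simp only [EuclideanSpace.inner_toLp_toLp, dotProduct, Pi.star_apply, RCLike.star_def, mul_comm]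
  rw [hinner, ← EuclideanSpace.norm_sq_eq, ← EuclideanSpace.norm_sq_eq, ← mul_pow]
  exact pow_le_pow_left₀ (norm_nonneg _) (norm_inner_le_norm _ _) 2

theorem le_sum_mul_inv_sum_inv_of_le_mul {ι : Type*} {s : Finset ι} (hs : s.Nonempty)
    {a p : ι → ℝ} {m : ℝ} (ha : ∀ k ∈ s, 0 ≤ a k) (hp : ∀ k ∈ s, 0 ≤ p k)
    (hm : ∀ k ∈ s, m ≤ a k * p k) :
    m ≤ (∑ k ∈ s, p k) * (∑ k ∈ s, (a k)⁻¹)⁻¹ := by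
  rcases le_or_gt m 0 with hm0 | hm0
  · exact hm0.trans <| mul_nonneg (sum_nonneg hp) <|
      inv_nonneg.2 <| sum_nonneg fun k hk => inv_nonneg.2 (ha k hk)
  have ha_pos : ∀ k ∈ s, 0 < a k := fun k hk =>
    pos_of_mul_pos_left (hm0.trans_le (hm k hk)) (hp k hk)
  have hsum : m * ∑ k ∈ s, (a k)⁻¹ ≤ ∑ k ∈ s, p k := by
    rw [mul_sum]
    refine sum_le_sum fun k hk => ?_
    rw [← div_eq_mul_inv, div_le_iff₀' (ha_pos k hk)]
    exact hm k hk
  rwa [← div_eq_mul_inv, le_div_iff₀ (sum_pos (fun k hk => inv_pos.2 (ha_pos k hk)) hs)]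

theorem stmt5_general (MN K : ℕ) (hK : 0 < K) (h w : Fin K → Fin MN → ℂ)
    (σ2 P : ℝ) (hσ : 0 < σ2)
    (hpow : ∑ k, ∑ i, ‖w k i‖ ^ 2 ≤ P) :
    Finset.univ.inf' (Finset.univ_nonempty_iff.mpr ⟨⟨0, hK⟩⟩)
      (fun k => ‖∑ i, (starRingEnd ℂ) (h k i) * w k i‖ ^ 2 /
        ((∑ j ∈ Finset.univ.erase k, ‖∑ i, (starRingEnd ℂ) (h k i) * w j i‖ ^ 2) + σ2))
    ≤ (P / σ2) * (∑ k, (∑ i, ‖h k i‖ ^ 2)⁻¹)⁻¹ := by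
  refine (le_sum_mul_inv_sum_inv_of_le_mul (univ_nonempty_iff.mpr ⟨⟨0, hK⟩⟩)
    (a := fun k => ∑ i, ‖h k i‖ ^ 2) (p := fun k => (∑ i, ‖w k i‖ ^ 2) / σ2)
    (fun k _ => by positivity) (fun k _ => by positivity)
    fun k hk => (inf'_le _ hk).trans ?_).trans ?_
  · calc _ ≤ ‖∑ i, (starRingEnd ℂ) (h k i) * w k i‖ ^ 2 / σ2 :=
          div_le_div_of_nonneg_left (by positivity) hσ
            (le_add_of_nonneg_left (sum_nonneg fun _ _ => by positivity))
      _ ≤ (∑ i, ‖h k i‖ ^ 2) * (∑ i, ‖w k i‖ ^ 2) / σ2 :=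
          div_le_div_of_nonneg_right (norm_sum_conj_mul_sq_le _ _) hσ.le
      _ = _ := mul_div_assoc ..
  · rw [← sum_div]
    exact mul_le_mul_of_nonneg_right (div_le_div_of_nonneg_right hpow hσ.le) (by positivity)

/-- SDMA max-min SINR bound: for channels `h_k`, beamformers `w_k` with total power `≤ P`,
the minimum SINR is at most `(P/σ²)(Σ_k 1/‖h_k‖₂²)⁻¹`. -/
theorem stmt5 (MN K : ℕ) (hK : 0 < K) (h w : Fin K → Fin MN → ℂ)
    (hnz : ∀ k, h k ≠ 0) (σ2 P : ℝ) (hσ : 0 < σ2) (hP : 0 < P)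
    (hpow : ∑ k, ∑ i, ‖w k i‖ ^ 2 ≤ P) :
    Finset.univ.inf' (Finset.univ_nonempty_iff.mpr ⟨⟨0, hK⟩⟩)
      (fun k => ‖∑ i, (starRingEnd ℂ) (h k i) * w k i‖ ^ 2 /
        ((∑ j ∈ Finset.univ.erase k, ‖∑ i, (starRingEnd ℂ) (h k i) * w j i‖ ^ 2) + σ2))
    ≤ (P / σ2) * (∑ k, (∑ i, ‖h k i‖ ^ 2)⁻¹)⁻¹ :=
  stmt5_general MN K hK h w σ2 P hσ hpow
end

section
/- Let t₁,…,t_M ∈ ℝ³, points s₁,…,s_K ∈ ℝ³, and h_k = b_k·(e^{j(2π/λ)‖t₁−s_k‖},…,e^{j(2π/λ)‖t_M−s_k‖})ᵀ with b_k ≠ 0. Then there exists a unit-modulus-scaled vector w = e^{jφ}/√M (entrywise |w_m| = 1/√M) with |h_kᴴw| = ‖h_k‖₂ simultaneously for all k = 1,…,K if and only if for each k ∈ {2,…,K} there exists a constant c_k ∈ ℝ such that ‖t_m−s₁‖ − ‖t_m−s_k‖ ≡ c_k (mod λ) for every m = 1,…,M. -/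
/-!
By the equality case of Cauchy–Schwarz, a vector `w` with `‖w‖₂ = 1` satisfies
`|h_kᴴ w| = ‖h_k‖₂` exactly when `w` is a multiple of `h_k`, hence of the phase vector
`e_k = (e^{j(2π/λ)‖t_m − s_k‖})_m`. A common `w` therefore exists iff every `e_k` is a multiple
of `e_1` (then `w = e_1/√M` works), i.e. iff `e^{j(2π/λ)(‖t_m − s_1‖ − ‖t_m − s_k‖)}` does not
depend on `m`, which is constancy of the distance difference modulo `λ`.
-/

open Finset Complex
open scoped Real ComplexConjugate

theorem norm_sum_conj_mul_eq_iff {ι : Type*} [Fintype ι] {u w : ι → ℂ} (hu : u ≠ 0)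
    (hw : ∑ m, ‖w m‖ ^ 2 = 1) :
    ‖∑ m, conj (u m) * w m‖ = √(∑ m, ‖u m‖ ^ 2) ↔ ∃ r : ℂ, w = r • u := by
  have hcs := (norm_inner_eq_norm_tfae ℂ (WithLp.toLp 2 u) (WithLp.toLp 2 w)).out 0 2
  rw [WithLp.toLp_eq_zero, or_iff_right hu] at hcs
  simpa only [PiLp.inner_apply, RCLike.inner_apply', EuclideanSpace.norm_eq, hw, Real.sqrt_one,
    mul_one, ← WithLp.toLp_smul, (WithLp.toLp_injective 2).eq_iff] using hcs

theorem sum_norm_sq_eq_one_of_norm_eq {ι : Type*} [Fintype ι] [Nonempty ι] {w : ι → ℂ}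
    (hw : ∀ m, ‖w m‖ = 1 / √(Fintype.card ι)) : ∑ m, ‖w m‖ ^ 2 = 1 := by
  simp [hw]

theorem norm_sum_conj_mul_mul_eq_iff {ι : Type*} [Fintype ι] {u w : ι → ℂ} {b : ℂ} (hb : b ≠ 0)
    (hu : u ≠ 0) (hw : ∑ m, ‖w m‖ ^ 2 = 1) :
    ‖∑ m, conj (b * u m) * w m‖ = √(∑ m, ‖b * u m‖ ^ 2) ↔ ∃ r : ℂ, w = r • u := by
  have hbu := norm_sum_conj_mul_eq_iff (smul_ne_zero hb hu) hw
  simp only [Pi.smul_apply, smul_eq_mul] at hbu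
  rw [hbu]
  constructor
  · rintro ⟨r, rfl⟩
    exact ⟨r * b, by rw [smul_smul]⟩
  · rintro ⟨r, rfl⟩
    exact ⟨r / b, by rw [smul_smul, div_mul_cancel₀ r hb]⟩

theorem exists_constModulus_phaseAligned_iff {κ ι : Type*} [Fintype ι] [Nonempty ι]
    {e : κ → ι → ℂ} (he : ∀ k m, ‖e k m‖ = 1) {b : κ → ℂ} (hb : ∀ k, b k ≠ 0) (k₀ : κ) :
    (∃ w : ι → ℂ, (∀ m, ‖w m‖ = 1 / √(Fintype.card ι)) ∧
        ∀ k, ‖∑ m, conj (b k * e k m) * w m‖ = √(∑ m, ‖b k * e k m‖ ^ 2)) ↔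
      ∀ k ≠ k₀, ∃ z : ℂ, ∀ m, e k₀ m = z * e k m := by
  have he_ne : ∀ k, e k ≠ 0 := fun k h => by
    simpa [h] using he k (Classical.arbitrary ι)
  have aligned_iff {w : ι → ℂ} (hw : ∀ m, ‖w m‖ = 1 / √(Fintype.card ι)) (k : κ) :=
    norm_sum_conj_mul_mul_eq_iff (hb k) (he_ne k) (sum_norm_sq_eq_one_of_norm_eq hw)
  constructor
  · rintro ⟨w, hw, halign⟩ k -
    obtain ⟨r₀, hr₀⟩ := (aligned_iff hw k₀).1 (halign k₀)
    obtain ⟨r, hr⟩ := (aligned_iff hw k).1 (halign k)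
    have hr₀ne : r₀ ≠ 0 := by
      rintro rfl
      have hm := hw (Classical.arbitrary ι)
      simp only [hr₀, zero_smul, Pi.zero_apply, norm_zero, one_div, zero_eq_inv] at hm
      exact absurd hm.symm (by positivity)
    refine ⟨r / r₀, fun m => ?_⟩
    have hm := (congrFun hr₀ m).symm.trans (congrFun hr m)
    simp only [Pi.smul_apply, smul_eq_mul] at hm
    field_simp
    linear_combination hm
  · intro hphase
    refine ⟨(1 / √(Fintype.card ι) : ℂ) • e k₀, fun m => by simp [he], fun k => ?_⟩
    refine (aligned_iff (fun m => by simp [he]) k).2 ?_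
    by_cases hk : k = k₀
    · subst hk
      exact ⟨_, rfl⟩
    · obtain ⟨z, hz⟩ := hphase k hk
      exact ⟨(1 / √(Fintype.card ι) : ℂ) * z, funext fun m => by simp [hz m, mul_assoc]⟩

theorem exp_I_mul_two_pi_div_mul_eq_iff {x y T : ℝ} (hT : T ≠ 0) :
    exp (I * (2 * π / T * x)) = exp (I * (2 * π / T * y)) ↔ ∃ n : ℤ, x = y + n * T := by
  have key (z : ℝ) : exp (I * (2 * π / T * z)) = Circle.exp (2 * π / T * z) := by
    rw [Circle.coe_exp]; push_cast; ring_nf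
  rw [key, key, Circle.coe_inj, Circle.exp_eq_exp]
  refine exists_congr fun n => ?_
  constructor <;> intro h
  · field_simp at h; linarith
  · rw [h]; field_simp

theorem exists_forall_exp_eq_mul_exp_iff {ι : Type*} (f g : ι → ℝ) {T : ℝ} (hT : T ≠ 0) :
    (∃ z : ℂ, ∀ m, exp (I * (2 * π / T * f m)) = z * exp (I * (2 * π / T * g m))) ↔
      ∃ c : ℝ, ∀ m, ∃ n : ℤ, f m - g m = c + n * T := by
  have hsplit : ∀ m, exp (I * (2 * π / T * f m)) =
      exp (I * (2 * π / T * (f m - g m : ℝ))) * exp (I * (2 * π / T * g m)) := fun m => by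
    rw [← exp_add]; push_cast; ring_nf
  simp_rw [hsplit, mul_left_inj' (exp_ne_zero _)]
  constructor
  · rintro ⟨z, hz⟩
    rcases isEmpty_or_nonempty ι with hι | ⟨⟨m₀⟩⟩
    · exact ⟨0, isEmptyElim⟩
    · exact ⟨f m₀ - g m₀, fun m =>
        (exp_I_mul_two_pi_div_mul_eq_iff hT).1 ((hz m).trans (hz m₀).symm)⟩
  · rintro ⟨c, hc⟩
    exact ⟨exp (I * (2 * π / T * c)), fun m => (exp_I_mul_two_pi_div_mul_eq_iff hT).2 (hc m)⟩

/-- Theorem 2: there exists a constant-modulus beamformer `w` (|w_m| = 1/√M) that is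
simultaneously phase-aligned with every user's channel (`|h_kᴴw| = ‖h_k‖₂` for all `k`)
iff for each user `k ≠ 1` the distance difference `‖t_m−s₁‖ − ‖t_m−s_k‖` is constant
modulo `λ` over `m`. -/
theorem stmt8 (M K : ℕ) (hM : 0 < M) (hK : 0 < K)
    (t : Fin M → EuclideanSpace ℝ (Fin 3)) (s : Fin K → EuclideanSpace ℝ (Fin 3))
    (lam : ℝ) (hlam : 0 < lam) (b : Fin K → ℂ) (hb : ∀ k, b k ≠ 0) :
    letI h : Fin K → Fin M → ℂ := fun k m =>
      b k * Complex.exp (Complex.I * (2 * Real.pi / lam * dist (t m) (s k)))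
    ((∃ w : Fin M → ℂ, (∀ m, ‖w m‖ = 1 / Real.sqrt M) ∧
        ∀ k, ‖∑ m, (starRingEnd ℂ) (h k m) * w m‖
          = Real.sqrt (∑ m, ‖h k m‖ ^ 2)) ↔
      (∀ k : Fin K, k ≠ ⟨0, hK⟩ → ∃ c : ℝ, ∀ m, ∃ n : ℤ,
        dist (t m) (s ⟨0, hK⟩) - dist (t m) (s k) = c + n * lam)) := by
  have : Nonempty (Fin M) := ⟨⟨0, hM⟩⟩
  have hunit : ∀ (k : Fin K) (m : Fin M),
      ‖exp (I * (2 * π / lam * dist (t m) (s k)))‖ = 1 := fun k m => by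
    rw [mul_comm]; exact_mod_cast norm_exp_ofReal_mul_I _
  have hcore := exists_constModulus_phaseAligned_iff hunit hb ⟨0, hK⟩
  rw [Fintype.card_fin] at hcore
  exact hcore.trans (forall₂_congr fun k _ => exists_forall_exp_eq_mul_exp_iff _ _ hlam.ne')
end
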